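/- arXiv:2312.00725 — 6 statements merged into one kernel-verified Lean document; each statement's English description precedes it below -/
import Mathlib

section
/- Let P be a point of the affine plane (triple summing to 1) and define the depth-k orbit Orbit^(k)(P) inductively: Orbit^(1)(P) = {P}, and Orbit^(k)(P) = ⋃_{1≤ℓ≤k−1} { Q₁⊠Q₂ : Q₁ ∈ Orbit^(ℓ)(P), Q₂ ∈ Orbit^(k−ℓ)(P) }. Then for every k ≥ 1 and every Q ∈ Orbit^(k)(P), one has c₃(Q) = 1 − (1 − c₃(P))^k. In particular all points of Orbit^(k)(P) are aligned on the line {A : c₃(A) = 1 − (1−c₃(P))^k}. -/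
noncomputable def bmul (A B : ℝ × ℝ × ℝ) : ℝ × ℝ × ℝ :=
  (A.1 * B.1 + A.1 * B.2.1 + (1/2) * A.2.1 * B.1 + (1/4) * A.2.2 * B.1,
   (1/2) * A.2.1 * B.1 + A.2.1 * B.2.1 - (1/4) * A.2.2 * B.1,
   A.1 * B.2.2 + A.2.1 * B.2.2 + A.2.2 * B.1 + A.2.2 * B.2.1 + A.2.2 * B.2.2)

inductive Orbit (P : ℝ × ℝ × ℝ) : ℕ → (ℝ × ℝ × ℝ) → Prop
  | base : Orbit P 1 P
  | mul {k l : ℕ} {Q R : ℝ × ℝ × ℝ} : Orbit P k Q → Orbit P l R → Orbit P (k + l) (bmul Q R)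

lemma aux (P : ℝ × ℝ × ℝ) (hP : P.1 + P.2.1 + P.2.2 = 1)
    (k : ℕ) (Q : ℝ × ℝ × ℝ) (hQ : Orbit P k Q) :
    Q.1 + Q.2.1 + Q.2.2 = 1 ∧ Q.2.2 = 1 - (1 - P.2.2) ^ k := by
  induction hQ with
  | base => exact ⟨hP, by ring⟩
  | @mul k' l' A B hA hB ihA ihB =>
    obtain ⟨sA, tA⟩ := ihA
    obtain ⟨sB, tB⟩ := ihB
    constructor
    · simp only [bmul]; nlinarith [sA, sB]
    · simp only [bmul]
      rw [pow_add]
      linear_combination B.2.2 * sA + A.2.2 * sB + (1 - B.2.2) * tA + (1 - P.2.2) ^ k' * tB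

theorem stmt2 (P : ℝ × ℝ × ℝ) (hP : P.1 + P.2.1 + P.2.2 = 1)
    (k : ℕ) (hk : 1 ≤ k) (Q : ℝ × ℝ × ℝ) (hQ : Orbit P k Q) :
    Q.2.2 = 1 - (1 - P.2.2) ^ k := (aux P hP k Q hQ).2
end

section
/- Define CHSH as the affine function on the plane with CHSH(PR)=1, CHSH(SR)=3/4, CHSH(I)=1/2, i.e., CHSH(a₁,a₂,a₃) = a₁ + (3/4)a₂ + (1/2)a₃. Let P=(p₁,p₂,p₃) with p₁,p₂ ≥ 0, p₁+p₂ ≤ 1, p₃ = 1−p₁−p₂, and let Q=(q₁,q₂,q₃), R=(r₁,r₂,r₃) be points of the plane with q₃ = r₃ (so the line QR is parallel to the line PR–SR). If CHSH(Q) ≥ CHSH(R), then CHSH(Q⊠P) ≥ CHSH(R⊠P) and CHSH(P⊠Q) ≥ CHSH(P⊠R). -/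
noncomputable def CHSH (A : ℝ × ℝ × ℝ) : ℝ := A.1 + (3/4) * A.2.1 + (1/2) * A.2.2

theorem stmt6 (P Q R : ℝ × ℝ × ℝ)
    (hP1 : 0 ≤ P.1) (hP2 : 0 ≤ P.2.1) (hP12 : P.1 + P.2.1 ≤ 1)
    (hP : P.2.2 = 1 - P.1 - P.2.1)
    (hQ : Q.1 + Q.2.1 + Q.2.2 = 1) (hR : R.1 + R.2.1 + R.2.2 = 1)
    (h3 : Q.2.2 = R.2.2) (hQR : CHSH Q ≥ CHSH R) :
    CHSH (bmul Q P) ≥ CHSH (bmul R P) ∧ CHSH (bmul P Q) ≥ CHSH (bmul P R) := by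
  simp only [bmul, CHSH] at *
  have hd : R.1 ≤ Q.1 := by linarith
  constructor <;> nlinarith [mul_nonneg hP1 (sub_nonneg.2 hd), mul_nonneg hP2 (sub_nonneg.2 hd), mul_nonneg (sub_nonneg.2 hP12) (sub_nonneg.2 hd)]
end

section
/- With P = (p₁,p₂,p₃) satisfying p₁,p₂ ≥ 0, p₁+p₂ ≤ 1, p₃ = 1−p₁−p₂, and Q, R points of the plane with q₃ = r₃, one has CHSH(Q⊠P) − CHSH(R⊠P) = (1/8)(p₁ + 2p₂)(q₁ − r₁) and CHSH(P⊠Q) − CHSH(P⊠R) = (1/16)(1 − p₁ + p₂)(q₁ − r₁). -/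
theorem stmt8 (P Q R : ℝ × ℝ × ℝ)
    (hP1 : 0 ≤ P.1) (hP2 : 0 ≤ P.2.1) (hP12 : P.1 + P.2.1 ≤ 1)
    (hP : P.2.2 = 1 - P.1 - P.2.1)
    (hQ : Q.1 + Q.2.1 + Q.2.2 = 1) (hR : R.1 + R.2.1 + R.2.2 = 1)
    (h3 : Q.2.2 = R.2.2) :
    CHSH (bmul Q P) - CHSH (bmul R P) = (1/8) * (P.1 + 2 * P.2.1) * (Q.1 - R.1) ∧
    CHSH (bmul P Q) - CHSH (bmul P R) = (1/16) * (1 - P.1 + P.2.1) * (Q.1 - R.1) := by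
  have h2 : Q.2.1 = 1 - Q.1 - Q.2.2 := by linarith
  have h2' : R.2.1 = 1 - R.1 - R.2.2 := by linarith
  constructor <;> simp only [CHSH, bmul, hP, h2, h2', h3] <;> ring
end

section
/- Represent each point A of the plane by its coordinates (x_A, y_A) where x_A = CHSHʹ(A) and y_A = CHSH(A), with PR=(1/2,1), SR=(3/4,3/4), I=(1/2,1/2). Then for any P and Q in the plane, CHSH(Q⊠P) − CHSH(P⊠Q) = (1/8)(12·x_P·y_Q − 12·y_P·x_Q − 7·x_P + 7·y_P + 7·x_Q − 7·y_Q). -/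
noncomputable def CHSH' (A : ℝ × ℝ × ℝ) : ℝ := (1/2) * A.1 + (3/4) * A.2.1 + (1/2) * A.2.2

theorem stmt9 (P Q : ℝ × ℝ × ℝ)
    (hP : P.1 + P.2.1 + P.2.2 = 1) (hQ : Q.1 + Q.2.1 + Q.2.2 = 1) :
    CHSH (bmul Q P) - CHSH (bmul P Q) =
      (1/8) * (12 * CHSH' P * CHSH Q - 12 * CHSH P * CHSH' Q
        - 7 * CHSH' P + 7 * CHSH P + 7 * CHSH' Q - 7 * CHSH Q) := by
  obtain ⟨a,b,c⟩ := P; obtain ⟨d,e,f⟩ := Q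
  have hc : c = 1 - a - b := by linarith
  have hf : f = 1 - d - e := by linarith
  simp only [CHSH, CHSH', bmul]
  subst hc hf
  ring
end

section
/- Let P be in the region Ã (convex hull of PR, SR, I with CHSH-value ≥ 3/4), and let Q be any point of the tilted orbit of P (any iterated ⊠-product of copies of P where at each step one factor is P itself). If CHSH(Q) ≥ CHSH(P), then CHSH(Q⊠P) ≥ CHSH(P⊠Q). -/
inductive TOrbit (P : ℝ × ℝ × ℝ) : ℕ → (ℝ × ℝ × ℝ) → Prop
  | base : TOrbit P 1 P
  | left {k : ℕ} {Q : ℝ × ℝ × ℝ} : TOrbit P k Q → TOrbit P (k + 1) (bmul P Q)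
  | right {k : ℕ} {Q : ℝ × ℝ × ℝ} : TOrbit P k Q → TOrbit P (k + 1) (bmul Q P)

lemma orbit_inv (P : ℝ × ℝ × ℝ) (hP1 : 0 ≤ P.1) (hP2 : 0 ≤ P.2.1) (hP3 : 0 ≤ P.2.2)
    (hPsum : P.1 + P.2.1 + P.2.2 = 1) {k : ℕ} {Q : ℝ × ℝ × ℝ} (h : TOrbit P k Q) :
    0 ≤ Q.1 ∧ 0 ≤ Q.2.2 ∧ Q.2.2 ≤ 1 ∧ Q.1 + Q.2.1 + Q.2.2 = 1 ∧
      P.1 * Q.2.1 ≤ P.2.1 * Q.1 ∧ P.2.2 * Q.1 ≤ P.1 * Q.2.2 := by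
  induction h with
  | base =>
    refine ⟨hP1, hP3, by linarith, hPsum, by ring_nf; rfl, by ring_nf; rfl⟩
  | @left k2 R h ih =>
    obtain ⟨h1, h2, h3, h4, h5, h6⟩ := ih
    simp only [bmul]
    refine ⟨?_, ?_, ?_, by nlinarith, ?_, ?_⟩
    · nlinarith [mul_nonneg hP1 h1, mul_nonneg hP2 h1, mul_nonneg hP3 h1]
    · nlinarith [mul_nonneg hP1 h2, mul_nonneg hP2 h2, mul_nonneg hP3 h1,
        mul_nonneg hP3 h2]
    · nlinarith [mul_nonneg hP3 h2]
    · nlinarith [mul_nonneg (mul_nonneg hP1 hP2) h1, mul_nonneg (mul_nonneg hP2 hP2) h1,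
        mul_nonneg (mul_nonneg hP2 hP3) h1, mul_nonneg (mul_nonneg hP1 hP3) h1]
    · nlinarith [mul_nonneg (mul_nonneg hP2 hP3) h1, mul_nonneg (mul_nonneg hP3 hP3) h1,
        mul_nonneg hP3 h1]
  | @right k2 R h ih =>
    obtain ⟨h1, h2, h3, h4, h5, h6⟩ := ih
    simp only [bmul]
    refine ⟨?_, ?_, ?_, by nlinarith, ?_, ?_⟩
    · nlinarith [mul_nonneg hP1 h1, mul_nonneg hP2 h1, mul_nonneg hP1 h2]
    · nlinarith [mul_nonneg hP3 h1, mul_nonneg hP3 h2]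
    · nlinarith [mul_nonneg hP3 h2]
    · nlinarith [mul_nonneg (mul_nonneg hP1 hP2) h1, mul_nonneg (mul_nonneg hP2 hP2) h1,
        mul_nonneg (mul_nonneg hP1 hP1) h2, mul_nonneg (mul_nonneg hP1 hP2) h2]
    · have hq12 : 0 ≤ R.1 + R.2.1 := by linarith
      nlinarith [mul_nonneg (sub_nonneg.2 h6) (by linarith : (0:ℝ) ≤ 1 - (1/4) * P.2.2),
        mul_nonneg (mul_nonneg hP1 hP3) hq12,
        mul_nonneg (mul_nonneg hP1 hP3) h1, mul_nonneg (mul_nonneg hP3 hP3) h1]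
    
theorem stmt11 (P Q : ℝ × ℝ × ℝ)
    (hP1 : 0 ≤ P.1) (hP2 : 0 ≤ P.2.1) (hP3 : 0 ≤ P.2.2)
    (hPsum : P.1 + P.2.1 + P.2.2 = 1) (hPchsh : 3/4 ≤ CHSH P)
    (hQ : ∃ k : ℕ, TOrbit P k Q) (h : CHSH Q ≥ CHSH P) :
    CHSH (bmul Q P) ≥ CHSH (bmul P Q) := by
  obtain ⟨k, hk⟩ := hQ
  have key := orbit_inv P hP1 hP2 hP3 hPsum hk
  obtain ⟨h1, h2, h3, h4, h5, h6⟩ := key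
  simp only [CHSH, bmul]
  nlinarith [mul_nonneg hP1 h1, mul_nonneg hP2 h1, mul_nonneg hP3 h1,
    mul_nonneg hP1 h2]
end

section
/- Let P ∈ Ã and k ≥ 2 such that CHSH(P^{⊠(k−1)}) ≥ CHSH(P), where P^{⊠k} denotes the left-nested product (((P⊠P)⊠P)⋯)⊠P with k factors. Assume inductively that P^{⊠k} maximizes CHSH over the tilted k-orbit Õ^(k)(P). Then for every Q ∈ Õ^(k)(P), both CHSH(P^{⊠(k+1)}) ≥ CHSH(Q⊠P) and CHSH(P^{⊠(k+1)}) ≥ CHSH(P⊠Q) hold; consequently P^{⊠(k+1)} maximizes CHSH over Õ^(k+1)(P). -/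
noncomputable def leftPow (P : ℝ × ℝ × ℝ) : ℕ → ℝ × ℝ × ℝ
  | 0 => P
  | 1 => P
  | (k + 1) => bmul (leftPow P k) P

/-!
Write `L = P^{⊠k} = M ⊠ P` with `M = P^{⊠(k-1)}`. Every `Q` in the `k`-orbit has the same total
mass and third coordinate as `L`, so `CHSH Q ≤ CHSH L` amounts to `Q.1 ≤ L.1`; shifting weight
from the second to the first coordinate of either factor raises the CHSH value of a product.
This gives `CHSH (Q ⊠ P) ≤ CHSH (L ⊠ P)` and `CHSH (P ⊠ Q) ≤ CHSH (P ⊠ L)`. The remaining inequality `CHSH (P ⊠ L) ≤ CHSH (L ⊠ P)` is a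
polynomial inequality in the coordinates of `P` and `M`, which holds because `CHSH M ≥ CHSH P`,
`M.2.2 ≥ P.2.2`, and `P.2.2 ≤ P.1` (the latter is `CHSH P ≥ 3/4`).
-/

lemma bmul_total (A B : ℝ × ℝ × ℝ) :
    (bmul A B).1 + (bmul A B).2.1 + (bmul A B).2.2 =
      (A.1 + A.2.1 + A.2.2) * (B.1 + B.2.1 + B.2.2) := by
  simp only [bmul]
  ring

lemma one_sub_bmul_snd_snd {A B : ℝ × ℝ × ℝ} (hA : A.1 + A.2.1 + A.2.2 = 1)
    (hB : B.1 + B.2.1 + B.2.2 = 1) :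
    1 - (bmul A B).2.2 = (1 - A.2.2) * (1 - B.2.2) := by
  simp only [bmul]
  linear_combination (-B.2.2) * hA + (-A.2.2) * hB

lemma CHSH_bmul_mono_left {P Q R : ℝ × ℝ × ℝ} (hP1 : 0 ≤ P.1) (hP2 : 0 ≤ P.2.1)
    (htotal : R.1 + R.2.1 + R.2.2 = Q.1 + Q.2.1 + Q.2.2) (h3 : R.2.2 = Q.2.2)
    (hRQ : CHSH R ≤ CHSH Q) :
    CHSH (bmul R P) ≤ CHSH (bmul Q P) := by
  have h1 : R.1 ≤ Q.1 := by
    simp only [CHSH] at hRQ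
    linarith
  have h2 : R.2.1 = Q.1 + Q.2.1 - R.1 := by linarith
  simp only [CHSH, bmul, h2, h3]
  nlinarith [mul_nonneg (sub_nonneg.2 h1) hP1, mul_nonneg (sub_nonneg.2 h1) hP2]

lemma CHSH_bmul_mono_right {P Q R : ℝ × ℝ × ℝ} (hP2 : 0 ≤ P.2.1) (hP3 : 0 ≤ P.2.2)
    (htotal : R.1 + R.2.1 + R.2.2 = Q.1 + Q.2.1 + Q.2.2) (h3 : R.2.2 = Q.2.2)
    (hRQ : CHSH R ≤ CHSH Q) :
    CHSH (bmul P R) ≤ CHSH (bmul P Q) := by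
  have h1 : R.1 ≤ Q.1 := by
    simp only [CHSH] at hRQ
    linarith
  have h2 : R.2.1 = Q.1 + Q.2.1 - R.1 := by linarith
  simp only [CHSH, bmul, h2, h3]
  nlinarith [mul_nonneg (sub_nonneg.2 h1) hP2, mul_nonneg (sub_nonneg.2 h1) hP3]

namespace TOrbit

variable {P Q : ℝ × ℝ × ℝ} {k : ℕ}

lemma pos (h : TOrbit P k Q) : 0 < k := by
  cases h <;> omega

lemma total_eq_one (hP : P.1 + P.2.1 + P.2.2 = 1) (h : TOrbit P k Q) :
    Q.1 + Q.2.1 + Q.2.2 = 1 := by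
  induction h with
  | base => exact hP
  | left _ ih => rw [bmul_total, hP, ih, one_mul]
  | right _ ih => rw [bmul_total, hP, ih, one_mul]

lemma snd_snd_eq (hP : P.1 + P.2.1 + P.2.2 = 1) (h : TOrbit P k Q) :
    Q.2.2 = 1 - (1 - P.2.2) ^ k := by
  suffices 1 - Q.2.2 = (1 - P.2.2) ^ k by linarith
  induction h with
  | base => rw [pow_one]
  | left hQ ih => rw [one_sub_bmul_snd_snd hP (hQ.total_eq_one hP), ih, pow_succ']
  | right hQ ih => rw [one_sub_bmul_snd_snd (hQ.total_eq_one hP) hP, ih, pow_succ]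

lemma snd_snd_eq_snd_snd {R : ℝ × ℝ × ℝ} (hP : P.1 + P.2.1 + P.2.2 = 1) (hQ : TOrbit P k Q)
    (hR : TOrbit P k R) : Q.2.2 = R.2.2 := by
  rw [hQ.snd_snd_eq hP, hR.snd_snd_eq hP]

lemma le_snd_snd (hP : P.1 + P.2.1 + P.2.2 = 1) (hP3 : 0 ≤ P.2.2) (hP3' : P.2.2 ≤ 1)
    (h : TOrbit P k Q) : P.2.2 ≤ Q.2.2 := by
  have : (1 - P.2.2) ^ k ≤ 1 - P.2.2 :=
    pow_le_of_le_one (by linarith) (by linarith) h.pos.ne'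
  rw [h.snd_snd_eq hP]
  linarith

end TOrbit

lemma TOrbit.leftPow (P : ℝ × ℝ × ℝ) {k : ℕ} (hk : 1 ≤ k) : TOrbit P k (leftPow P k) := by
  induction k, hk using Nat.le_induction with
  | base => exact TOrbit.base
  | succ n hn ih =>
    obtain ⟨j, rfl⟩ : ∃ j, n = j + 1 := ⟨n - 1, by omega⟩
    exact TOrbit.right ih

lemma CHSH_bmul_bmul_le {P M : ℝ × ℝ × ℝ} (hP1 : 0 ≤ P.1) (hP2 : 0 ≤ P.2.1)
    (hP3 : 0 ≤ P.2.2) (hP : P.1 + P.2.1 + P.2.2 = 1) (hP31 : P.2.2 ≤ P.1)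
    (hM : M.1 + M.2.1 + M.2.2 = 1) (hM3 : P.2.2 ≤ M.2.2) (hMP : CHSH P ≤ CHSH M) :
    CHSH (bmul P (bmul M P)) ≤ CHSH (bmul (bmul M P) P) := by
  obtain ⟨p1, p2, p3⟩ := P
  obtain ⟨m1, m2, s⟩ := M
  obtain rfl : p2 = 1 - p1 - p3 := by simp only at hP; linarith
  obtain rfl : m2 = 1 - m1 - s := by simp only at hM; linarith
  simp only at hP1 hP2 hP3 hP31 hM3
  have hm : p1 - p3 + s ≤ m1 := by
    simp only [CHSH] at hMP
    linarith
  have hc : 0 ≤ ((1 - p1 - p3) + p1 / 2) * (2 - 3 * p3) :=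
    mul_nonneg (by linarith) (by linarith)
  have h1 : 0 ≤ (m1 - (p1 - p3 + s)) * (((1 - p1 - p3) + p1 / 2) * (2 - 3 * p3)) :=
    mul_nonneg (by linarith) hc
  have h2 : 0 ≤ (s - p3) *
      (((1 - p1 - p3) + p1 / 2) * (2 - 3 * p3) + p1 * (5/2 - (9/4) * p3)) :=
    mul_nonneg (by linarith) (add_nonneg hc (mul_nonneg hP1 (by linarith)))
  have h3 : 0 ≤ p1 * ((1 - p1 - p3) + (3/4) * p3 ^ 2 + (3/2) * p1 * p3) :=
    mul_nonneg hP1 (by nlinarith [sq_nonneg p3, mul_nonneg hP1 hP3])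
  simp only [CHSH, bmul]
  nlinarith [h1, h2, h3]

theorem stmt12 (P : ℝ × ℝ × ℝ)
    (hP1 : 0 ≤ P.1) (hP2 : 0 ≤ P.2.1) (hP3 : 0 ≤ P.2.2)
    (hPsum : P.1 + P.2.1 + P.2.2 = 1) (hPchsh : 3/4 ≤ CHSH P)
    (k : ℕ) (hk : 2 ≤ k)
    (hdistill : CHSH (leftPow P (k - 1)) ≥ CHSH P)
    (hmax : ∀ Q : ℝ × ℝ × ℝ, TOrbit P k Q → CHSH (leftPow P k) ≥ CHSH Q) :
    (∀ Q : ℝ × ℝ × ℝ, TOrbit P k Q →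
      CHSH (leftPow P (k + 1)) ≥ CHSH (bmul Q P) ∧
      CHSH (leftPow P (k + 1)) ≥ CHSH (bmul P Q)) ∧
    (∀ Q : ℝ × ℝ × ℝ, TOrbit P (k + 1) Q → CHSH (leftPow P (k + 1)) ≥ CHSH Q) := by
  obtain ⟨j, rfl⟩ : ∃ j, k = j + 2 := ⟨k - 2, by omega⟩
  have hM := TOrbit.leftPow P (k := j + 1) (by omega)
  have hL := TOrbit.leftPow P (k := j + 2) (by omega)
  have hP31 : P.2.2 ≤ P.1 := by
    simp only [CHSH] at hPchsh
    linarith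
  have hcomm : CHSH (bmul P (leftPow P (j + 2))) ≤ CHSH (leftPow P (j + 2 + 1)) :=
    CHSH_bmul_bmul_le hP1 hP2 hP3 hPsum hP31 (hM.total_eq_one hPsum)
      (hM.le_snd_snd hPsum hP3 (by linarith)) hdistill
  have hsides : ∀ Q, TOrbit P (j + 2) Q →
      CHSH (leftPow P (j + 2 + 1)) ≥ CHSH (bmul Q P) ∧
      CHSH (leftPow P (j + 2 + 1)) ≥ CHSH (bmul P Q) := by
    intro Q hQ
    have htotal := (hQ.total_eq_one hPsum).trans (hL.total_eq_one hPsum).symm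
    have h3 := hQ.snd_snd_eq_snd_snd hPsum hL
    exact ⟨CHSH_bmul_mono_left hP1 hP2 htotal h3 (hmax Q hQ),
      (CHSH_bmul_mono_right hP2 hP3 htotal h3 (hmax Q hQ)).trans hcomm⟩
  refine ⟨hsides, fun Q hQ => ?_⟩
  cases hQ with
  | left hQ => exact (hsides _ hQ).2
  | right hQ => exact (hsides _ hQ).1
end
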